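/- arXiv:1912.12684 — 6 statements merged into one kernel-verified Lean document; each statement's English description precedes it below -/
import Mathlib

section
/- Let a and b be strings of symbols of lengths n and m respectively over an alphabet Σ, and let 0 < γ < 1. If strings ã and b̃ are obtained by deleting at most ⌊γ(n+m)⌋ terms from a and b altogether, then f̄(a, b) ≥ f̄(ã, b̃) − 2γ. -/
open MeasureTheory

namespace Paper

variable {σ : Type*}

/-- The concatenation of `t` copies of the string `w`. -/
def rep (w : List σ) (t : ℕ) : List σ := (List.replicate t w).flatten

/-- `I` is a match between the strings `a` and `b` (with 0-based indices):
a collection of pairs of indices, strictly increasing in both coordinates,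
pairing equal symbols. -/
def IsMatch (a b : List σ) (I : List (ℕ × ℕ)) : Prop :=
  I.Chain' (fun p q => p.1 < q.1 ∧ p.2 < q.2) ∧
  ∀ p ∈ I, p.1 < a.length ∧ p.2 < b.length ∧ a[p.1]? = b[p.2]?

/-- The largest cardinality of a match between `a` and `b`. -/
noncomputable def maxMatch (a b : List σ) : ℕ :=
  sSup {r | ∃ I, IsMatch a b I ∧ I.length = r}

/-- The `f̄` distance between two strings. -/
noncomputable def fbar (a b : List σ) : ℝ :=
  1 - 2 * (maxMatch a b : ℝ) / (a.length + b.length)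

/-- `I` is an approximate match between the strings `a` and `b` (0-based indices):
pairs of indices, nondecreasing in each coordinate and strictly increasing as pairs,
pairing equal symbols, such that the set of indices paired with any given index is
contained in a set of three consecutive indices. -/
def IsApproxMatch (a b : List σ) (I : List (ℕ × ℕ)) : Prop :=
  I.Chain' (fun p q => p.1 ≤ q.1 ∧ p.2 ≤ q.2 ∧ p ≠ q) ∧
  (∀ p ∈ I, p.1 < a.length ∧ p.2 < b.length ∧ a[p.1]? = b[p.2]?) ∧
  (∀ p ∈ I, (∃ s, ∀ q ∈ I, q.1 = p.1 → q.2 ∈ ({s, s+1, s+2} : Set ℕ)) ∧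
            (∃ t, ∀ q ∈ I, q.2 = p.2 → q.1 ∈ ({t, t+1, t+2} : Set ℕ)))

/-- The largest cardinality of an approximate match between `a` and `b`. -/
noncomputable def maxApproxMatch (a b : List σ) : ℕ :=
  sSup {r | ∃ I, IsApproxMatch a b I ∧ I.length = r}

/-- The approximate distance `f̃` between two strings. -/
noncomputable def ftilde (a b : List σ) : ℝ :=
  max 0 (1 - 2 * (maxApproxMatch a b : ℝ) / (a.length + b.length))

end Paper

/-
A match of size `r` between `a` and `b` is the same thing as a common subsequence of length `r`,
so `maxMatch a b` is the length of a longest common subsequence. Deleting `d` symbols from `a`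
and `b` removes at most `d` symbols from a longest common subsequence, so the maximal match drops
by at most `d`, while the total length drops by exactly `d`; with `d ≤ γ(n + m)` this moves `f̄`
by at most `2γ`.
-/

open Paper List

theorem List.Sublist.exists_common_sublist {α : Type*} {a c t : List α} (hc : c <+ a)
    (ht : t <+ a) : ∃ u, u <+ c ∧ u <+ t ∧ c.length + t.length ≤ a.length + u.length := by
  induction a generalizing c t with
  | nil => exact ⟨[], by simp_all⟩
  | cons x a ih =>
    cases hc with
    | cons _ hc =>
      cases ht with
      | cons _ ht =>
        obtain ⟨u, huc, hut, hlen⟩ := ih hc ht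
        exact ⟨u, huc, hut, by simp; omega⟩
      | cons_cons _ ht =>
        obtain ⟨u, huc, hut, hlen⟩ := ih hc ht
        exact ⟨u, huc, hut.cons x, by simp; omega⟩
    | cons_cons _ hc =>
      cases ht with
      | cons _ ht =>
        obtain ⟨u, huc, hut, hlen⟩ := ih hc ht
        exact ⟨u, huc.cons x, hut, by simp; omega⟩
      | cons_cons _ ht =>
        obtain ⟨u, huc, hut, hlen⟩ := ih hc ht
        exact ⟨x :: u, huc.cons_cons x, hut.cons_cons x, by simp; omega⟩

namespace Paper

variable {σ : Type*}

theorem isMatch_iff_pairwise {a b : List σ} {I : List (ℕ × ℕ)} :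
    IsMatch a b I ↔ I.Pairwise (fun p q => p.1 < q.1 ∧ p.2 < q.2) ∧
      ∀ p ∈ I, p.1 < a.length ∧ p.2 < b.length ∧ a[p.1]? = b[p.2]? :=
  have : IsTrans (ℕ × ℕ) (fun p q => p.1 < q.1 ∧ p.2 < q.2) :=
    ⟨fun _ _ _ h₁ h₂ => ⟨h₁.1.trans h₂.1, h₁.2.trans h₂.2⟩⟩
  and_congr_left' isChain_iff_pairwise

theorem exists_isMatch_of_sublist {a b l : List σ} (hla : l <+ a) (hlb : l <+ b) :
    ∃ I, IsMatch a b I ∧ I.length = l.length := by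
  obtain ⟨f, hf⟩ := sublist_iff_exists_orderEmbedding_getElem?_eq.mp hla
  obtain ⟨g, hg⟩ := sublist_iff_exists_orderEmbedding_getElem?_eq.mp hlb
  refine ⟨(range l.length).map fun i => (f i, g i),
    isMatch_iff_pairwise.mpr ⟨?_, ?_⟩, by simp⟩
  · exact pairwise_map.mpr
      (pairwise_lt_range.imp fun hij => ⟨f.strictMono hij, g.strictMono hij⟩)
  · simp only [mem_map, mem_range, forall_exists_index, and_imp]
    rintro _ i hi rfl
    have hli : l[i]? ≠ none := by simp [hi]
    refine ⟨?_, ?_, (hf i).symm.trans (hg i)⟩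
    · simpa [hf i] using hli
    · simpa [hg i] using hli

theorem IsMatch.exists_sublist {a b : List σ} {I : List (ℕ × ℕ)} (h : IsMatch a b I) :
    ∃ c, c <+ a ∧ c <+ b ∧ c.length = I.length := by
  obtain ⟨hsorted, hmem⟩ := isMatch_iff_pairwise.mp h
  let is : List (Fin a.length) := I.pmap (fun p hp => ⟨p.1, hp⟩) fun p hp => (hmem p hp).1
  let js : List (Fin b.length) := I.pmap (fun p hp => ⟨p.2, hp⟩) fun p hp => (hmem p hp).2.1
  have his : is.map (a[·]) <+ a :=
    map_getElem_sublist (hsorted.pmap _ fun _ _ _ _ hpq => hpq.1)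
  have hjs : js.map (b[·]) <+ b :=
    map_getElem_sublist (hsorted.pmap _ fun _ _ _ _ hpq => hpq.2)
  have heq : is.map (a[·]) = js.map (b[·]) := by
    simp only [is, js, map_pmap]
    refine pmap_congr_left _ fun p hp h₁ h₂ => ?_
    have := (hmem p hp).2.2
    rwa [getElem?_eq_getElem h₁, getElem?_eq_getElem h₂, Option.some_inj] at this
  exact ⟨_, his, heq ▸ hjs, by simp [is]⟩

theorem maxMatch_bddAbove (a b : List σ) :
    BddAbove {r | ∃ I, IsMatch a b I ∧ I.length = r} := by
  refine ⟨a.length, ?_⟩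
  rintro _ ⟨I, hI, rfl⟩
  obtain ⟨c, hca, -, hc⟩ := hI.exists_sublist
  exact hc ▸ hca.length_le

theorem exists_sublist_length_eq_maxMatch (a b : List σ) :
    ∃ c, c <+ a ∧ c <+ b ∧ c.length = maxMatch a b := by
  obtain ⟨I, hI, hlen⟩ : maxMatch a b ∈ {r | ∃ I, IsMatch a b I ∧ I.length = r} :=
    Nat.sSup_mem ⟨0, [], isMatch_iff_pairwise.mpr (by simp), rfl⟩ (maxMatch_bddAbove a b)
  obtain ⟨c, hca, hcb, hc⟩ := hI.exists_sublist
  exact ⟨c, hca, hcb, hc.trans hlen⟩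

theorem length_le_maxMatch {a b c : List σ} (hca : c <+ a) (hcb : c <+ b) :
    c.length ≤ maxMatch a b :=
  le_csSup (maxMatch_bddAbove a b) (exists_isMatch_of_sublist hca hcb)

theorem maxMatch_le_length_left (a b : List σ) : maxMatch a b ≤ a.length := by
  obtain ⟨c, hca, -, hc⟩ := exists_sublist_length_eq_maxMatch a b
  exact hc ▸ hca.length_le

theorem maxMatch_add_length_le_of_sublist {a b ta tb : List σ} (hta : ta <+ a) (htb : tb <+ b) :
    maxMatch a b + ta.length + tb.length ≤ maxMatch ta tb + a.length + b.length := by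
  obtain ⟨c, hca, hcb, hc⟩ := exists_sublist_length_eq_maxMatch a b
  obtain ⟨u, huc, huta, hu⟩ := hca.exists_common_sublist hta
  obtain ⟨v, hvu, hvtb, hv⟩ := (huc.trans hcb).exists_common_sublist htb
  have hv_le := length_le_maxMatch (hvu.trans huta) hvtb
  omega

theorem fbar_sub_le_of_sublist {a b ta tb : List σ} (hta : ta <+ a) (htb : tb <+ b) :
    fbar ta tb - 2 * (((a.length + b.length : ℕ) : ℝ) - (ta.length + tb.length : ℕ)) /
      (a.length + b.length : ℕ) ≤ fbar a b := by
  set P : ℕ := a.length + b.length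
  set Q : ℕ := ta.length + tb.length
  have hQP : Q ≤ P := Nat.add_le_add hta.length_le htb.length_le
  have hkey : (maxMatch a b : ℝ) ≤ maxMatch ta tb + ((P : ℝ) - Q) := by
    have hnat := maxMatch_add_length_le_of_sublist hta htb
    rw [← Nat.cast_sub hQP]
    exact_mod_cast (by omega : maxMatch a b ≤ maxMatch ta tb + (P - Q))
  -- `x / 0 = 0` is harmless here: if `Q = 0` then `ta = tb = []`, so `maxMatch ta tb = 0`
  have hshrink : (maxMatch ta tb : ℝ) / P ≤ maxMatch ta tb / Q := by
    rcases Nat.eq_zero_or_pos Q with hQ | hQ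
    · have : maxMatch ta tb = 0 := by have := maxMatch_le_length_left ta tb; omega
      simp [this]
    · exact div_le_div_of_nonneg_left (Nat.cast_nonneg _) (by exact_mod_cast hQ)
        (by exact_mod_cast hQP)
  have hdiv : (maxMatch a b : ℝ) / P ≤ maxMatch ta tb / P + ((P : ℝ) - Q) / P := by
    rw [← add_div]
    exact div_le_div_of_nonneg_right hkey (Nat.cast_nonneg _)
  simp only [fbar, ← Nat.cast_add, mul_div_assoc]
  linarith

end Paper

theorem statement0_general {σ : Type*} (γ : ℝ) (hγ0 : 0 < γ)
    (a b ta tb : List σ) (hta : ta <+ a) (htb : tb <+ b)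
    (hcount : (a.length - ta.length) + (b.length - tb.length) ≤
      ⌊γ * ((a.length : ℝ) + b.length)⌋₊) :
    fbar ta tb - 2 * γ ≤ fbar a b := by
  have hdeleted : ((a.length + b.length : ℕ) : ℝ) - (ta.length + tb.length : ℕ) ≤
      γ * (a.length + b.length : ℕ) := by
    have hfloor := Nat.floor_le (a := γ * ((a.length : ℝ) + b.length)) (by positivity)
    have hcount' : ((a.length - ta.length + (b.length - tb.length) : ℕ) : ℝ) ≤ _ :=
      Nat.cast_le.mpr hcount
    push_cast [hta.length_le, htb.length_le] at hcount' ⊢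
    linarith
  have hratio := div_le_of_le_mul₀ (Nat.cast_nonneg _) hγ0.le hdeleted
  have hfbar := fbar_sub_le_of_sublist hta htb
  rw [mul_div_assoc] at hfbar
  linarith

/-- If `ta` and `tb` are obtained from strings `a` and `b` by deleting
at most `⌊γ(n+m)⌋` terms altogether, where `0 < γ < 1`, then
`f̄(a,b) ≥ f̄(ta,tb) − 2γ`. -/
theorem statement0 {σ : Type*} (γ : ℝ) (hγ0 : 0 < γ) (hγ1 : γ < 1)
    (a b ta tb : List σ) (hta : ta <+ a) (htb : tb <+ b)
    (hcount : (a.length - ta.length) + (b.length - tb.length) ≤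
      ⌊γ * ((a.length : ℝ) + b.length)⌋₊) :
    fbar ta tb - 2 * γ ≤ fbar a b :=
  statement0_general γ hγ0 a b ta tb hta htb hcount
end

section
/- Let a and b be strings of lengths n and m over an alphabet Σ, let 0 < γ < 1, and let ã and b̃ be obtained from a and b by deleting the terms at index sets D_a ⊆ {1,…,n} and D_b ⊆ {1,…,m} with |D_a| + |D_b| ≤ ⌊γ(n+m)⌋. If there exists a best possible match I between a and b (that is, a match realizing the supremum in the definition of f̄(a,b)) such that no deleted term is matched by I with a non-deleted term (i.e., for every (i, j) ∈ I, i ∈ D_a if and only if j ∈ D_b), then f̄(a, b) ≥ f̄(ã, b̃) − γ. -/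
open MeasureTheory

open Paper List

/-- The string obtained from `a` by deleting the terms whose (0-based) index lies in `D`. -/
def deleteAt {σ : Type*} (a : List σ) (D : Finset ℕ) : List σ :=
  (((List.range a.length).zip a).filter fun p => decide (p.1 ∉ D)).map Prod.snd

/-!
Split a best match `I` into the pairs whose two ends are deleted and the pairs whose two ends
survive. Pairs of the first kind have distinct first coordinates in `Da` and distinct second
coordinates in `Db`, so there are at most `min |Da| |Db| ≤ d / 2` of them, `d = |Da| + |Db|`;
pairs of the second kind, reindexed, form a match of the shortened strings. Hence
`2 maxMatch a b ≤ 2 maxMatch ã b̃ + d`, and dividing by `n + m`, using `d ≤ γ (n + m)` and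
`|ã| + |b̃| = n + m - d ≤ n + m`, gives the claim.
-/

section Deletion

variable {σ : Type*}

def keptIndices (n : ℕ) (D : Finset ℕ) : List ℕ :=
  (List.range n).filter fun i => decide (i ∉ D)

/-- For `i ∉ D`, the index at which `a[i]` sits in `deleteAt a D`. -/
def keptRank (D : Finset ℕ) (i : ℕ) : ℕ :=
  (keptIndices i D).length

theorem keptIndices_eq_append_cons {n i : ℕ} {D : Finset ℕ} (h : i < n) (hi : i ∉ D) :
    ∃ l, keptIndices n D = keptIndices i D ++ i :: l := by
  obtain ⟨s, rfl⟩ : ∃ s, n = i + (s + 1) := ⟨n - i - 1, by omega⟩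
  refine ⟨((List.range s).map (fun x => i + (x + 1))).filter fun j => decide (j ∉ D), ?_⟩
  rw [keptIndices, List.range_add, List.filter_append, List.range_succ_eq_map, List.map_cons,
    List.filter_cons]
  simp [hi, keptIndices, Function.comp_def]

theorem length_keptIndices_add_card {n : ℕ} {D : Finset ℕ} (hD : ∀ i ∈ D, i < n) :
    (keptIndices n D).length + D.card = n := by
  have hnodup : (keptIndices n D).Nodup := List.nodup_range.filter _
  have hset : (keptIndices n D).toFinset = Finset.range n \ D := by
    ext i
    simp [keptIndices]
  have hsub : D ⊆ Finset.range n := fun i hi => Finset.mem_range.mpr (hD i hi)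
  rw [← List.toFinset_card_of_nodup hnodup, hset, Finset.card_sdiff_add_card_eq_card hsub,
    Finset.card_range]

theorem keptRank_lt_keptRank {i j : ℕ} {D : Finset ℕ} (h : i < j) (hi : i ∉ D) :
    keptRank D i < keptRank D j := by
  obtain ⟨l, hl⟩ := keptIndices_eq_append_cons h hi
  simp [keptRank, hl]

theorem getElem?_keptIndices_keptRank {n i : ℕ} {D : Finset ℕ} (h : i < n) (hi : i ∉ D) :
    (keptIndices n D)[keptRank D i]? = some i := by
  obtain ⟨l, hl⟩ := keptIndices_eq_append_cons h hi
  rw [hl, keptRank, List.getElem?_append_right le_rfl]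
  simp

theorem getElem?_fst_of_mem_zip_range {n : ℕ} {a : List σ} {p : ℕ × σ}
    (hp : p ∈ (List.range n).zip a) : a[p.1]? = some p.2 := by
  obtain ⟨k, hk⟩ := List.mem_iff_getElem?.mp hp
  obtain ⟨hk₁, hk₂⟩ := List.getElem?_zip_eq_some.mp hk
  obtain ⟨_, hkp⟩ := List.getElem?_eq_some_iff.mp hk₁
  rw [List.getElem_range] at hkp
  rwa [← hkp]

theorem map_fst_filter_zip_range (a : List σ) (D : Finset ℕ) :
    (((List.range a.length).zip a).filter fun p => decide (p.1 ∉ D)).map Prod.fst =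
      keptIndices a.length D := by
  have hfst : ((List.range a.length).zip a).map Prod.fst = List.range a.length :=
    List.map_fst_zip (by simp)
  rw [keptIndices, ← hfst, List.filter_map, hfst]
  rfl

theorem length_deleteAt (a : List σ) (D : Finset ℕ) :
    (deleteAt a D).length = (keptIndices a.length D).length := by
  rw [deleteAt, List.length_map, ← map_fst_filter_zip_range a D, List.length_map]

theorem getElem?_deleteAt_of_getElem?_keptIndices {a : List σ} {D : Finset ℕ} {k i : ℕ}
    (hk : (keptIndices a.length D)[k]? = some i) : (deleteAt a D)[k]? = a[i]? := by
  rw [← map_fst_filter_zip_range, List.getElem?_map, Option.map_eq_some_iff] at hk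
  obtain ⟨p, hp, rfl⟩ := hk
  rw [deleteAt, List.getElem?_map, hp,
    getElem?_fst_of_mem_zip_range (List.mem_of_mem_filter (List.mem_of_getElem? hp))]
  rfl

theorem getElem?_deleteAt_keptRank {a : List σ} {D : Finset ℕ} {i : ℕ} (h : i < a.length)
    (hi : i ∉ D) : (deleteAt a D)[keptRank D i]? = a[i]? :=
  getElem?_deleteAt_of_getElem?_keptIndices (getElem?_keptIndices_keptRank h hi)

theorem keptRank_lt_length_deleteAt {a : List σ} {D : Finset ℕ} {i : ℕ} (h : i < a.length)
    (hi : i ∉ D) : keptRank D i < (deleteAt a D).length := by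
  rw [length_deleteAt]
  exact (List.getElem?_eq_some_iff.mp (getElem?_keptIndices_keptRank h hi)).1

theorem length_deleteAt_add_card {a : List σ} {D : Finset ℕ} (hD : ∀ i ∈ D, i < a.length) :
    (deleteAt a D).length + D.card = a.length := by
  rw [length_deleteAt, length_keptIndices_add_card hD]

end Deletion

namespace Paper.IsMatch

variable {σ : Type*} {a b : List σ} {I : List (ℕ × ℕ)}

theorem pairwise (h : IsMatch a b I) : I.Pairwise fun p q => p.1 < q.1 ∧ p.2 < q.2 :=
  haveI : Trans (fun p q : ℕ × ℕ => p.1 < q.1 ∧ p.2 < q.2)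
      (fun p q : ℕ × ℕ => p.1 < q.1 ∧ p.2 < q.2) (fun p q : ℕ × ℕ => p.1 < q.1 ∧ p.2 < q.2) :=
    ⟨fun hpq hqr => ⟨hpq.1.trans hqr.1, hpq.2.trans hqr.2⟩⟩
  h.1.pairwise

theorem length_le_card_of_forall_fst_mem {S : Finset ℕ} (h : IsMatch a b I)
    (hS : ∀ p ∈ I, p.1 ∈ S) : I.length ≤ S.card := by
  have hnodup : (I.map Prod.fst).Nodup :=
    List.pairwise_map.mpr (h.pairwise.imp fun hpq => hpq.1.ne)
  rw [← List.length_map Prod.fst, ← List.toFinset_card_of_nodup hnodup]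
  exact Finset.card_le_card fun x hx => by
    obtain ⟨p, hp, rfl⟩ := List.mem_map.mp (List.mem_toFinset.mp hx)
    exact hS p hp

theorem length_le_card_of_forall_snd_mem {S : Finset ℕ} (h : IsMatch a b I)
    (hS : ∀ p ∈ I, p.2 ∈ S) : I.length ≤ S.card := by
  have hnodup : (I.map Prod.snd).Nodup :=
    List.pairwise_map.mpr (h.pairwise.imp fun hpq => hpq.2.ne)
  rw [← List.length_map Prod.snd, ← List.toFinset_card_of_nodup hnodup]
  exact Finset.card_le_card fun x hx => by
    obtain ⟨p, hp, rfl⟩ := List.mem_map.mp (List.mem_toFinset.mp hx)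
    exact hS p hp

theorem length_le_maxMatch (h : IsMatch a b I) : I.length ≤ maxMatch a b := by
  have hbdd : BddAbove {r | ∃ J, IsMatch a b J ∧ J.length = r} := by
    refine ⟨a.length, ?_⟩
    rintro _ ⟨J, hJ, rfl⟩
    simpa using hJ.length_le_card_of_forall_fst_mem fun p hp => Finset.mem_range.mpr (hJ.2 p hp).1
  exact le_csSup hbdd ⟨I, h, rfl⟩

theorem filter (h : IsMatch a b I) (P : ℕ × ℕ → Bool) : IsMatch a b (I.filter P) :=
  ⟨(h.pairwise.filter P).isChain, fun p hp => h.2 p (List.mem_of_mem_filter hp)⟩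

theorem map_keptRank {Da Db : Finset ℕ} (h : IsMatch a b I)
    (hkept : ∀ p ∈ I, p.1 ∉ Da ∧ p.2 ∉ Db) :
    IsMatch (deleteAt a Da) (deleteAt b Db)
      (I.map fun p => (keptRank Da p.1, keptRank Db p.2)) := by
  refine ⟨(List.pairwise_map.mpr (h.pairwise.imp_of_mem ?_)).isChain, ?_⟩
  · intro p q hp _ hpq
    exact ⟨keptRank_lt_keptRank hpq.1 (hkept p hp).1, keptRank_lt_keptRank hpq.2 (hkept p hp).2⟩
  · intro q hq
    obtain ⟨p, hp, rfl⟩ := List.mem_map.mp hq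
    obtain ⟨ha, hb, hab⟩ := h.2 p hp
    exact ⟨keptRank_lt_length_deleteAt ha (hkept p hp).1,
      keptRank_lt_length_deleteAt hb (hkept p hp).2,
      by rw [getElem?_deleteAt_keptRank ha (hkept p hp).1,
        getElem?_deleteAt_keptRank hb (hkept p hp).2, hab]⟩

end Paper.IsMatch

theorem two_mul_length_le_two_mul_maxMatch_deleteAt_add {σ : Type*} {a b : List σ}
    {Da Db : Finset ℕ} {I : List (ℕ × ℕ)} (hI : IsMatch a b I)
    (hnocross : ∀ p ∈ I, p.1 ∈ Da ↔ p.2 ∈ Db) :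
    2 * I.length ≤ 2 * maxMatch (deleteAt a Da) (deleteAt b Db) + (Da.card + Db.card) := by
  have hsplit := List.length_eq_length_filter_add (l := I) fun p => decide (p.1 ∉ Da)
  have hkept := (hI.filter fun p => decide (p.1 ∉ Da)).map_keptRank (Da := Da) (Db := Db)
    fun p hp => by
      have hp₁ : p.1 ∉ Da := by simpa using List.of_mem_filter hp
      exact ⟨hp₁, fun hp₂ => hp₁ ((hnocross p (List.mem_of_mem_filter hp)).mpr hp₂)⟩
  have hdeleted : ∀ p ∈ I.filter (fun p => !decide (p.1 ∉ Da)), p.1 ∈ Da ∧ p.2 ∈ Db :=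
    fun p hp => by
      have hp₁ : p.1 ∈ Da := by simpa using List.of_mem_filter hp
      exact ⟨hp₁, (hnocross p (List.mem_of_mem_filter hp)).mp hp₁⟩
  have hDa := (hI.filter _).length_le_card_of_forall_fst_mem fun p hp => (hdeleted p hp).1
  have hDb := (hI.filter _).length_le_card_of_forall_snd_mem fun p hp => (hdeleted p hp).2
  have hM := hkept.length_le_maxMatch
  rw [List.length_map] at hM
  omega

theorem two_mul_div_le_two_mul_div_sub_add {M M' d N γ : ℝ} (hγ0 : 0 < γ) (hγ1 : γ < 1)
    (hM' : 0 ≤ M') (hd : 0 ≤ d) (hdN : d ≤ γ * N) (hM : 2 * M ≤ 2 * M' + d) :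
    2 * M / N ≤ 2 * M' / (N - d) + γ := by
  rcases (nonneg_of_mul_nonneg_right (hd.trans hdN) hγ0).eq_or_lt with hN | hN
  · have hd0 : d = 0 := le_antisymm (by simpa [← hN] using hdN) hd
    simp [← hN, hd0, hγ0.le]
  have hNd : 0 < N - d := by nlinarith
  calc 2 * M / N ≤ (2 * M' + d) / N := div_le_div_of_nonneg_right hM hN.le
    _ = 2 * M' / N + d / N := add_div _ _ _
    _ ≤ 2 * M' / (N - d) + γ :=
      add_le_add (div_le_div_of_nonneg_left (by positivity) hNd (by linarith))
        ((div_le_iff₀ hN).mpr hdN)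

/-- Suppose `ta` and `tb` are obtained from `a` and `b` by deleting the
terms at index sets `Da` and `Db` with `|Da| + |Db| ≤ ⌊γ(n+m)⌋`, where `0 < γ < 1`.
If there is a best possible match `I` between `a` and `b` such that no deleted term is
matched by `I` with a non-deleted term, then `f̄(a,b) ≥ f̄(ta,tb) − γ`. -/
theorem statement1 {σ : Type*} (γ : ℝ) (hγ0 : 0 < γ) (hγ1 : γ < 1)
    (a b : List σ) (Da Db : Finset ℕ)
    (hDa : ∀ i ∈ Da, i < a.length) (hDb : ∀ j ∈ Db, j < b.length)
    (hcount : Da.card + Db.card ≤ ⌊γ * ((a.length : ℝ) + b.length)⌋₊)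
    (I : List (ℕ × ℕ)) (hI : IsMatch a b I) (hbest : I.length = maxMatch a b)
    (hnocross : ∀ p ∈ I, p.1 ∈ Da ↔ p.2 ∈ Db) :
    fbar (deleteAt a Da) (deleteAt b Db) - γ ≤ fbar a b := by
  have hd : ((Da.card + Db.card : ℕ) : ℝ) ≤ γ * (a.length + b.length) :=
    (Nat.le_floor_iff (by positivity)).mp hcount
  have hM : ((2 * maxMatch a b : ℕ) : ℝ) ≤
      ((2 * maxMatch (deleteAt a Da) (deleteAt b Db) + (Da.card + Db.card) : ℕ) : ℝ) := by
    exact_mod_cast hbest ▸ two_mul_length_le_two_mul_maxMatch_deleteAt_add hI hnocross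
  push_cast at hd hM
  have hlen : ((deleteAt a Da).length : ℝ) + (deleteAt b Db).length =
      (a.length + b.length) - (Da.card + Db.card) := by
    rw [← length_deleteAt_add_card hDa, ← length_deleteAt_add_card hDb]
    push_cast
    ring
  have key := two_mul_div_le_two_mul_div_sub_add hγ0 hγ1 (Nat.cast_nonneg _) (by positivity) hd hM
  rw [fbar, fbar, hlen]
  linarith
end

section
/- Let N and k be positive integers and ε ∈ (0,1) be such that εN > 2 and εk is a positive integer, and set k' = (1−ε)k. Suppose k' symbols are chosen independently from {1, 2, …, N−1}, each symbol equally likely to be chosen at each trial (i.e., the k' choices are independent and uniformly distributed on {1,…,N−1}). Then the probability τ that there exists a symbol i_0 ∈ {1,…,N−1} that is chosen more than k/N times satisfies τ < 4N²/(ε²k). -/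
open Finset

private lemma sum_eval_prod {K M : ℕ} (g : Fin K → Fin M → ℝ) :
    ∑ ω : Fin K → Fin M, ∏ t, g t (ω t) = ∏ t, ∑ x, g t x := by
  rw [← Fintype.piFinset_univ, Finset.sum_prod_piFinset]

private lemma sum_ind_prod {K M : ℕ} (hM : (M:ℝ) ≠ 0) (i : Fin M) (S : Finset (Fin K)) :
    ∑ ω : Fin K → Fin M, ∏ t ∈ S, (if ω t = i then (1:ℝ) else 0)
      = (M:ℝ)^K / (M:ℝ)^S.card := by
  have h1 : ∀ ω : Fin K → Fin M,
      (∏ t ∈ S, (if ω t = i then (1:ℝ) else 0))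
        = ∏ t : Fin K, (if t ∈ S then (if ω t = i then (1:ℝ) else 0) else 1) := by
    intro ω
    rw [Finset.prod_ite_mem, Finset.univ_inter]
  simp_rw [h1]
  rw [sum_eval_prod (g := fun t x => if t ∈ S then (if x = i then (1:ℝ) else 0) else 1)]
  have h2 : ∀ t : Fin K, (∑ x : Fin M, if t ∈ S then (if x = i then (1:ℝ) else 0) else 1)
      = (M:ℝ) * (if t ∈ S then (M:ℝ)⁻¹ else 1) := by
    intro t
    by_cases h : t ∈ S <;>
      simp [h, mul_inv_cancel₀ hM]
  simp_rw [h2]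
  rw [Finset.prod_mul_distrib, Finset.prod_const, Finset.prod_ite_mem, Finset.univ_inter,
    Finset.prod_const, Finset.card_univ, Fintype.card_fin, inv_pow, div_eq_mul_inv]

set_option maxHeartbeats 1000000 in
private lemma perSymbol (N k K M : ℕ) (ε : ℝ) (hkR : (0:ℝ) < k)
    (hNR : (0:ℝ) < N) (hMR : (M:ℝ) = (N:ℝ) - 1) (hM0 : (0:ℝ) < M)
    (hε0 : 0 < ε) (hεN : 2 < ε * N)
    (hKR : (K:ℝ) = (1 - ε) * k) (hKk : (K:ℝ) ≤ k) (i : Fin M) :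
    ((Finset.univ.filter fun ω : Fin K → Fin M =>
        k < N * (Finset.univ.filter fun t => ω t = i).card).card : ℝ)
      * (ε * k / (2 * M))^2 ≤ k * (M:ℝ)^K / M := by
  have hMne : (M:ℝ) ≠ 0 := ne_of_gt hM0
  have hNne : (N:ℝ) ≠ 0 := ne_of_gt hNR
  have hN1 : (0:ℝ) < (N:ℝ) - 1 := hMR ▸ hM0
  set T : ℝ := (M:ℝ)^K with hT
  have hT0 : 0 < T := pow_pos hM0 K
  set f : (Fin K → Fin M) → ℝ :=
    fun ω => ((Finset.univ.filter fun t => ω t = i).card : ℝ) with hf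
  have hcardf : ∀ ω : Fin K → Fin M, f ω = ∑ t, (if ω t = i then (1:ℝ) else 0) := by
    intro ω
    show ((Finset.univ.filter fun t => ω t = i).card : ℝ) = _
    rw [Finset.card_filter]
    push_cast
    rfl
  have hsingle : ∀ t : Fin K,
      ∑ ω : Fin K → Fin M, (if ω t = i then (1:ℝ) else 0) = T / M := by
    intro t
    have h := sum_ind_prod hMne i {t}
    simpa using h
  have hpair : ∀ t s : Fin K,
      ∑ ω : Fin K → Fin M, (if ω t = i then (1:ℝ) else 0) * (if ω s = i then (1:ℝ) else 0)
        = T / M^2 + (if t = s then T/M - T/M^2 else 0) := by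
    intro t s
    by_cases h : t = s
    · subst h
      have e : ∀ ω : Fin K → Fin M,
          (if ω t = i then (1:ℝ) else 0) * (if ω t = i then (1:ℝ) else 0)
            = (if ω t = i then (1:ℝ) else 0) := by
        intro ω; by_cases hh : ω t = i <;> simp [hh]
      simp_rw [e]
      rw [hsingle t]
      split_ifs with hh
      · ring
      · simp at hh
    · have h2 := sum_ind_prod hMne i {t, s}
      rw [Finset.card_pair h] at h2
      rw [if_neg h, add_zero]
      rw [← h2]
      apply Finset.sum_congr rfl
      intro ω _
      rw [Finset.prod_pair h]
  set μ : ℝ := (K:ℝ) / M with hμ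
  have hsum1 : ∑ ω : Fin K → Fin M, f ω = K * T / M := by
    simp_rw [hcardf]
    rw [Finset.sum_comm]
    simp_rw [hsingle]
    rw [Finset.sum_const, Finset.card_univ, Fintype.card_fin, nsmul_eq_mul]
    ring
  have hsum2 : ∑ ω : Fin K → Fin M, (f ω)^2
      = K^2 * T / M^2 + K * (T/M - T/M^2) := by
    have e : ∀ ω : Fin K → Fin M, (f ω)^2
        = ∑ t, ∑ s, (if ω t = i then (1:ℝ) else 0) * (if ω s = i then (1:ℝ) else 0) := by
      intro ω
      rw [hcardf, sq, Finset.sum_mul_sum]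
    simp_rw [e]
    rw [Finset.sum_comm]
    have hcol : ∀ t : Fin K, ∑ ω : Fin K → Fin M,
        ∑ s, (if ω t = i then (1:ℝ) else 0) * (if ω s = i then (1:ℝ) else 0)
        = ∑ s, (T / M^2 + (if t = s then T/M - T/M^2 else 0)) := by
      intro t
      rw [Finset.sum_comm]
      exact Finset.sum_congr rfl fun s _ => hpair t s
    have hrow : ∀ t : Fin K, (∑ s : Fin K, (T / M^2 + (if t = s then T/M - T/M^2 else 0)))
        = K * (T/M^2) + (T/M - T/M^2) := by
      intro t
      rw [Finset.sum_add_distrib, Finset.sum_const, Finset.card_univ, Fintype.card_fin,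
        Finset.sum_ite_eq, if_pos (Finset.mem_univ t), nsmul_eq_mul]
    simp_rw [hcol, hrow]
    rw [Finset.sum_const, Finset.card_univ, Fintype.card_fin, nsmul_eq_mul]
    ring
  have hvar : ∑ ω : Fin K → Fin M, (f ω - μ)^2 ≤ k * T / M := by
    have e : ∀ ω : Fin K → Fin M, (f ω - μ)^2 = (f ω)^2 - 2*μ*(f ω) + μ^2 :=
      fun ω => by ring
    have hTM : ((M^K : ℕ) : ℝ) = T := by rw [hT]; push_cast; ring
    have hsum3 : ∑ ω : Fin K → Fin M, (f ω - μ)^2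
        = (K^2 * T / M^2 + K * (T/M - T/M^2)) - 2*μ*(K * T / M) + T * μ^2 := by
      simp_rw [e]
      rw [Finset.sum_add_distrib, Finset.sum_sub_distrib, ← Finset.mul_sum, hsum1, hsum2,
        Finset.sum_const, Finset.card_univ, Fintype.card_fun, Fintype.card_fin, Fintype.card_fin,
        nsmul_eq_mul, hTM]
    rw [hsum3, hμ]
    have expand : ((K:ℝ)^2 * T / M^2 + K * (T/M - T/M^2)) - 2*((K:ℝ)/M)*(K*T/M)
        + T*((K:ℝ)/M)^2 = K*(T/M) - K*(T/M^2) := by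
      field_simp
      ring
    rw [expand]
    have h1 : 0 ≤ (K:ℝ) * (T/M^2) :=
      mul_nonneg (Nat.cast_nonneg K) (le_of_lt (div_pos hT0 (by positivity)))
    have h2 : (K:ℝ) * (T/M) ≤ k * (T/M) :=
      mul_le_mul_of_nonneg_right hKk (le_of_lt (div_pos hT0 hM0))
    calc (K:ℝ)*(T/M) - K*(T/M^2) ≤ (K:ℝ)*(T/M) := by linarith
      _ ≤ k * (T/M) := h2
      _ = k * T / M := by ring
  set δ : ℝ := ε * k / (2 * M) with hδ
  have hδ0 : 0 < δ := by
    rw [hδ]; exact div_pos (mul_pos hε0 hkR) (mul_pos two_pos hM0)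
  set B := Finset.univ.filter fun ω : Fin K → Fin M =>
      k < N * (Finset.univ.filter fun t => ω t = i).card with hB
  have hgap : ∀ ω ∈ B, δ ≤ f ω - μ := by
    intro ω hω
    rw [hB, Finset.mem_filter] at hω
    have hlt : (k:ℝ) < N * f ω := by
      have h2 : (k:ℝ) < (N:ℝ) * ((Finset.univ.filter fun t => ω t = i).card : ℝ) := by
        exact_mod_cast hω.2
      exact h2
    have hfgt : (k:ℝ)/N < f ω := by
      rw [div_lt_iff₀ hNR]
      linarith [hlt]
    have hkey : (k:ℝ)/N - μ - δ = k * (ε*N - 2) / (2*N*(N-1)) := by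
      rw [hμ, hδ, hKR, hMR]
      field_simp
      ring
    have hpos : 0 ≤ (k:ℝ) * (ε*N - 2) / (2*N*(N-1)) := by
      apply div_nonneg
      · nlinarith
      · nlinarith
    linarith [hfgt, hkey, hpos]
  have cheb : (B.card : ℝ) * δ^2 ≤ ∑ ω : Fin K → Fin M, (f ω - μ)^2 := by
    have h1 : (B.card : ℝ) * δ^2 = ∑ _ω ∈ B, δ^2 := by
      rw [Finset.sum_const, nsmul_eq_mul]
    rw [h1]
    calc ∑ _ω ∈ B, δ^2 ≤ ∑ ω ∈ B, (f ω - μ)^2 := by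
          apply Finset.sum_le_sum
          intro ω hω
          exact pow_le_pow_left₀ (le_of_lt hδ0) (hgap ω hω) 2
      _ ≤ ∑ ω : Fin K → Fin M, (f ω - μ)^2 := by
          apply Finset.sum_le_sum_of_subset_of_nonneg (Finset.filter_subset _ _)
          intro ω _ _
          exact sq_nonneg _
  calc (B.card : ℝ) * δ^2 ≤ ∑ ω : Fin K → Fin M, (f ω - μ)^2 := cheb
    _ ≤ k * T / M := hvar

set_option maxHeartbeats 1000000

/-- **Chebychev application.** Let `N, k` be positive integers and
`ε ∈ (0,1)` with `εN > 2` and `εk` a positive integer `j`; set `k' = (1−ε)k = k − j`.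
If `k'` symbols are chosen independently and uniformly from `{1,…,N−1}` (modeled as the
uniform distribution on `Fin k' → Fin (N−1)`), then the probability that some symbol is
chosen more than `k/N` times is less than `4N²/(ε²k)`. -/
theorem statement4 (N k j : ℕ) (ε : ℝ) (hN : 0 < N) (hk : 0 < k)
    (hε0 : 0 < ε) (hε1 : ε < 1) (hεN : 2 < ε * N)
    (hj : (j : ℝ) = ε * k) (hj0 : 0 < j) :
    (((Finset.univ.filter fun ω : Fin (k - j) → Fin (N - 1) =>
          ∃ i₀ : Fin (N - 1),
            k < N * (Finset.univ.filter fun t => ω t = i₀).card).card : ℝ) /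
        (Fintype.card (Fin (k - j) → Fin (N - 1)) : ℝ)) <
      4 * N ^ 2 / (ε ^ 2 * k) := by
  have hkR : (0:ℝ) < k := by exact_mod_cast hk
  have hNR : (0:ℝ) < N := by exact_mod_cast hN
  have hN2R : (2:ℝ) < N := by nlinarith
  have hjk : j < k := by
    have : (j:ℝ) < k := by nlinarith
    exact_mod_cast this
  set M := N - 1 with hMdef
  set K := k - j with hKdef
  have hMR : (M:ℝ) = (N:ℝ) - 1 := by
    rw [hMdef, Nat.cast_sub hN]
    norm_num
  have hM0 : (0:ℝ) < M := by rw [hMR]; linarith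
  have hMne : (M:ℝ) ≠ 0 := ne_of_gt hM0
  have hKR : (K:ℝ) = (1 - ε) * k := by
    have h1 : (K:ℝ) = (k:ℝ) - j := by
      rw [hKdef, Nat.cast_sub hjk.le]
    rw [h1, hj]; ring
  have hKk : (K:ℝ) ≤ k := by rw [hKR]; nlinarith
  set T : ℝ := (M:ℝ)^K with hT
  have hT0 : 0 < T := pow_pos hM0 K
  have hcardR : ((Fintype.card (Fin K → Fin M)) : ℝ) = T := by
    rw [Fintype.card_fun, Fintype.card_fin, Fintype.card_fin, hT]
    push_cast
    ring
  set B : Fin M → Finset (Fin K → Fin M) := fun i =>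
    Finset.univ.filter fun ω => k < N * (Finset.univ.filter fun t => ω t = i).card with hBdef
  set big := Finset.univ.filter fun ω : Fin K → Fin M =>
      ∃ i₀ : Fin M, k < N * (Finset.univ.filter fun t => ω t = i₀).card with hbig
  have hunion : (big.card : ℝ) ≤ ∑ i : Fin M, ((B i).card : ℝ) := by
    have hsub : big ⊆ Finset.univ.biUnion B := by
      intro ω hω
      rw [hbig, Finset.mem_filter] at hω
      obtain ⟨i₀, hi₀⟩ := hω.2
      rw [Finset.mem_biUnion]
      exact ⟨i₀, Finset.mem_univ _,
        Finset.mem_filter.mpr ⟨Finset.mem_univ _, hi₀⟩⟩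
    have := (Finset.card_le_card hsub).trans Finset.card_biUnion_le
    exact_mod_cast this
  set δ : ℝ := ε * k / (2 * M) with hδ
  have hδ0 : 0 < δ := by
    rw [hδ]; exact div_pos (mul_pos hε0 hkR) (mul_pos two_pos hM0)
  have hper : ∀ i : Fin M, ((B i).card : ℝ) * δ^2 ≤ k * T / M :=
    fun i => perSymbol N k K M ε hkR hNR hMR hM0 hε0 hεN hKR hKk i
  have hbigbound : (big.card : ℝ) * δ^2 ≤ k * T := by
    calc (big.card : ℝ) * δ^2 ≤ (∑ i : Fin M, ((B i).card : ℝ)) * δ^2 :=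
          mul_le_mul_of_nonneg_right hunion (sq_nonneg δ)
      _ = ∑ i : Fin M, ((B i).card : ℝ) * δ^2 := by rw [Finset.sum_mul]
      _ ≤ ∑ _i : Fin M, k * T / M := Finset.sum_le_sum fun i _ => hper i
      _ = M * (k * T / M) := by
          rw [Finset.sum_const, Finset.card_univ, Fintype.card_fin, nsmul_eq_mul]
      _ = k * T := by field_simp
  have hMN : (M:ℝ) < N := by rw [hMR]; linarith
  have hkne : (k:ℝ) ≠ 0 := ne_of_gt hkR
  have hfinal : (big.card : ℝ) * (ε^2 * k) < 4 * N^2 * T := by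
    have e : (big.card : ℝ) * (ε^2 * k) = ((big.card : ℝ) * δ^2) * (4 * M^2 / k) := by
      rw [hδ]; field_simp; ring
    have h2 : ((big.card : ℝ) * δ^2) * (4 * M^2 / k) ≤ (k * T) * (4 * M^2 / k) :=
      mul_le_mul_of_nonneg_right hbigbound (by positivity)
    have h3 : (k * T) * (4 * (M:ℝ)^2 / k) = 4 * M^2 * T := by field_simp
    have hM2N2 : (M:ℝ)^2 < (N:ℝ)^2 := by nlinarith [hM0, hMN]
    have h4 : 4 * (M:ℝ)^2 * T < 4 * N^2 * T := by
      have h5 := mul_lt_mul_of_pos_right hM2N2 hT0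
      linarith
    rw [e]
    linarith
  rw [hcardR, div_lt_div_iff₀ hT0 (mul_pos (pow_pos hε0 2) hkR)]
  linarith [hfinal]
end

section
/- Suppose Pr and Pr' are two probability distributions defined on a measurable space, and Q and R are countable measurable partitions of that space. Suppose that for some 0 < ε < 1, Σ_{Q ∈ Q, R ∈ R} |Pr(Q ∩ R) − Pr'(Q ∩ R)| < ε, and that Pr'(Q) > 0 whenever Pr(Q) > 0 for Q ∈ Q. Then the atoms Q ∈ Q with Pr(Q) > 0 for which Σ_{R ∈ R} |Pr(R | Q) − Pr'(R | Q)| ≥ 2√ε have total Pr-measure at most √ε; equivalently, for a collection of atoms Q ∈ Q of total Pr-measure at least 1 − √ε, the conditional probabilities satisfy Σ_{R ∈ R} |Pr(R | Q) − Pr'(R | Q)| < 2√ε. -/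
open MeasureTheory

/-- **Conditioning Lemma.** Suppose `P` and `P'` are two probability measures
on a measurable space, and `Q`, `R` are countable measurable partitions. If
`Σ_{Q,R} |P(Q∩R) − P'(Q∩R)| < ε` for some `0 < ε < 1`, and `P'(Q) > 0` whenever `P(Q) > 0`,
then the atoms `Q` with `P(Q) > 0` for which `Σ_R |P(R|Q) − P'(R|Q)| ≥ 2√ε` have total
`P`-measure at most `√ε`. -/
theorem statement5 {Ω : Type*} [MeasurableSpace Ω]
    (P P' : Measure Ω) [IsProbabilityMeasure P] [IsProbabilityMeasure P']
    {ι κ : Type*} [Countable ι] [Countable κ]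
    (Q : ι → Set Ω) (R : κ → Set Ω)
    (hQm : ∀ i, MeasurableSet (Q i)) (hQd : Pairwise (Function.onFun Disjoint Q))
    (hQc : (⋃ i, Q i) = Set.univ)
    (hRm : ∀ j, MeasurableSet (R j)) (hRd : Pairwise (Function.onFun Disjoint R))
    (hRc : (⋃ j, R j) = Set.univ)
    (ε : ℝ) (hε0 : 0 < ε) (hε1 : ε < 1)
    (hclose : ∑' p : ι × κ,
        |(P (Q p.1 ∩ R p.2)).toReal - (P' (Q p.1 ∩ R p.2)).toReal| < ε)
    (habs : ∀ i, 0 < P (Q i) → 0 < P' (Q i)) :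
    (P (⋃ i ∈ {i : ι | 0 < P (Q i) ∧
        2 * Real.sqrt ε ≤ ∑' j : κ,
          |(P (R j ∩ Q i)).toReal / (P (Q i)).toReal -
            (P' (R j ∩ Q i)).toReal / (P' (Q i)).toReal|}, Q i)).toReal ≤
      Real.sqrt ε := by
  set s := Real.sqrt ε with hs_def
  have hs0 : 0 < s := Real.sqrt_pos.mpr hε0
  have hss : s * s = ε := Real.mul_self_sqrt hε0.le
  set B : Set ι := {i : ι | 0 < P (Q i) ∧
      2 * s ≤ ∑' j : κ,
        |(P (R j ∩ Q i)).toReal / (P (Q i)).toReal -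
          (P' (R j ∩ Q i)).toReal / (P' (Q i)).toReal|} with hB_def
  -- the product family is a measurable pairwise-disjoint family
  have hPQRm : ∀ p : ι × κ, MeasurableSet (Q p.1 ∩ R p.2) := fun p => (hQm p.1).inter (hRm p.2)
  have hPQRd : Pairwise (Function.onFun Disjoint fun p : ι × κ => Q p.1 ∩ R p.2) := by
    rintro ⟨i, j⟩ ⟨i', j'⟩ hne
    by_cases h : i = i'
    · subst h
      have hj : j ≠ j' := fun hj => hne (by simp [hj])
      exact (hRd hj).mono Set.inter_subset_right Set.inter_subset_right
    · exact (hQd h).mono Set.inter_subset_left Set.inter_subset_left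
  -- splitting an atom of Q along R, for any finite measure
  have hsplit : ∀ (μ : Measure Ω), (∀ S, μ S ≠ ⊤) → ∀ i : ι,
      (μ (Q i)).toReal = ∑' j, (μ (Q i ∩ R j)).toReal ∧
        Summable fun j => (μ (Q i ∩ R j)).toReal := by
    intro μ hμ i
    have hU : Q i = ⋃ j, Q i ∩ R j := by rw [← Set.inter_iUnion, hRc, Set.inter_univ]
    have hdj : Pairwise (Function.onFun Disjoint fun j => Q i ∩ R j) :=
      fun j j' h => (hRd h).mono Set.inter_subset_right Set.inter_subset_right
    have hm : ∀ j, MeasurableSet (Q i ∩ R j) := fun j => (hQm i).inter (hRm j)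
    have heq : μ (Q i) = ∑' j, μ (Q i ∩ R j) := by
      conv_lhs => rw [hU]
      exact measure_iUnion hdj hm
    refine ⟨?_, ?_⟩
    · rw [heq, ENNReal.tsum_toReal_eq (fun j => hμ _)]
    · exact ENNReal.summable_toReal (heq ▸ hμ (Q i))
  -- summability of the "difference" family  f
  set f : ι × κ → ℝ := fun p =>
    |(P (Q p.1 ∩ R p.2)).toReal - (P' (Q p.1 ∩ R p.2)).toReal| with hf_def
  have hsumP : Summable fun p : ι × κ => (P (Q p.1 ∩ R p.2)).toReal := by
    refine ENNReal.summable_toReal ?_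
    rw [← measure_iUnion hPQRd hPQRm]; exact measure_ne_top P _
  have hsumP' : Summable fun p : ι × κ => (P' (Q p.1 ∩ R p.2)).toReal := by
    refine ENNReal.summable_toReal ?_
    rw [← measure_iUnion hPQRd hPQRm]; exact measure_ne_top P' _
  have hsumf : Summable f := by
    refine Summable.of_nonneg_of_le (fun p => abs_nonneg _) (fun p => ?_) (hsumP.add hsumP')
    have h1 : (0:ℝ) ≤ (P (Q p.1 ∩ R p.2)).toReal := ENNReal.toReal_nonneg
    have h2 : (0:ℝ) ≤ (P' (Q p.1 ∩ R p.2)).toReal := ENNReal.toReal_nonneg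
    rw [abs_le]
    constructor <;> linarith
  set d : ι → ℝ := fun i => ∑' j, f (i, j) with hd_def
  have hd_nonneg : ∀ i, 0 ≤ d i := fun i => tsum_nonneg fun j => abs_nonneg _
  have hdsum : Summable d := hsumf.prod
  have hdlt : ∑' i, d i < ε := by
    rw [hd_def, ← Summable.tsum_prod' hsumf fun i => hsumf.prod_factor i]
    exact hclose
  -- key estimate on bad atoms
  have key : ∀ i ∈ B, s * (P (Q i)).toReal ≤ d i := by
    rintro i ⟨hp0, hbad⟩
    set p : ℝ := (P (Q i)).toReal with hp_def
    set p' : ℝ := (P' (Q i)).toReal with hp'_def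
    have hp : 0 < p := ENNReal.toReal_pos hp0.ne' (measure_ne_top P _)
    have hp' : 0 < p' := ENNReal.toReal_pos (habs i hp0).ne' (measure_ne_top P' _)
    obtain ⟨hPeq, hPsumm⟩ := hsplit P (fun S => measure_ne_top P S) i
    obtain ⟨hP'eq, hP'summ⟩ := hsplit P' (fun S => measure_ne_top P' S) i
    set a : κ → ℝ := fun j => (P (Q i ∩ R j)).toReal with ha_def
    set b : κ → ℝ := fun j => (P' (Q i ∩ R j)).toReal with hb_def
    have hfi : Summable fun j => f (i, j) := hsumf.prod_factor i
    have hfabs : ∀ j, f (i, j) = |a j - b j| := fun j => rfl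
    -- |p - p'| ≤ d i
    have hpp' : |p - p'| ≤ d i := by
      have h1 : p - p' = ∑' j, (a j - b j) := by
        rw [Summable.tsum_sub hPsumm hP'summ, ← hPeq, ← hP'eq]
      rw [h1]
      have := norm_tsum_le_tsum_norm (f := fun j => a j - b j)
        (by simpa [Real.norm_eq_abs] using hfi)
      simpa [Real.norm_eq_abs] using this
    -- pointwise bound
    have hpoint : ∀ j, |a j / p - b j / p'| ≤ |a j - b j| / p + b j * (|p - p'| / (p * p')) := by
      intro j
      have hb0 : 0 ≤ b j := ENNReal.toReal_nonneg
      have heq : a j / p - b j / p' = (a j - b j) / p + b j * ((p' - p) / (p * p')) := by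
        field_simp
        ring
      rw [heq]
      refine (abs_add_le _ _).trans ?_
      have h1 : |(a j - b j) / p| = |a j - b j| / p := by
        rw [abs_div, abs_of_pos hp]
      have h2 : |b j * ((p' - p) / (p * p'))| = b j * (|p - p'| / (p * p')) := by
        rw [abs_mul, abs_of_nonneg hb0, abs_div, abs_of_pos (mul_pos hp hp'), abs_sub_comm]
      rw [h1, h2]
    have hg : Summable fun j => |a j - b j| / p + b j * (|p - p'| / (p * p')) :=
      (hfi.div_const p).add (hP'summ.mul_right _)
    have hLHSsumm : Summable fun j => |a j / p - b j / p'| :=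
      Summable.of_nonneg_of_le (fun j => abs_nonneg _) hpoint hg
    have hmain : (∑' j, |a j / p - b j / p'|) ≤ 2 * d i / p := by
      calc (∑' j, |a j / p - b j / p'|)
          ≤ ∑' j, (|a j - b j| / p + b j * (|p - p'| / (p * p'))) :=
            Summable.tsum_le_tsum hpoint hLHSsumm hg
        _ = (∑' j, |a j - b j|) / p + (∑' j, b j) * (|p - p'| / (p * p')) := by
            rw [Summable.tsum_add (hfi.div_const p) (hP'summ.mul_right _), tsum_div_const,
              tsum_mul_right]
        _ = d i / p + p' * (|p - p'| / (p * p')) := by rw [← hP'eq]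
        _ = d i / p + |p - p'| / p := by
            field_simp
        _ ≤ d i / p + d i / p := by
            gcongr
        _ = 2 * d i / p := by ring
    -- from the badness hypothesis
    have hbad' : 2 * s ≤ ∑' j, |a j / p - b j / p'| := by
      refine hbad.trans_eq (tsum_congr fun j => ?_)
      rw [Set.inter_comm (R j) (Q i)]
    have h2s : 2 * s ≤ 2 * d i / p := hbad'.trans hmain
    have : s ≤ d i / p := by
      have := h2s
      rw [div_eq_mul_inv] at this ⊢
      nlinarith [mul_pos hp (by positivity : (0:ℝ) < p⁻¹)]
    calc s * p ≤ (d i / p) * p := by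
          exact mul_le_mul_of_nonneg_right this hp.le
      _ = d i := by field_simp
  -- assemble
  have hBcount : B.Countable := B.to_countable
  have hBm : P (⋃ i ∈ B, Q i) = ∑' i : B, P (Q i) :=
    measure_biUnion hBcount (fun i _ j _ h => hQd h) (fun i _ => hQm i)
  rw [hBm, ENNReal.tsum_toReal_eq (fun _ => measure_ne_top P _)]
  have hpB : Summable fun i : B => (P (Q i)).toReal :=
    ENNReal.summable_toReal (by rw [← hBm]; exact measure_ne_top P _)
  have hdB : Summable fun i : B => d i := hdsum.subtype B
  have hstep : s * ∑' i : B, (P (Q (i : ι))).toReal ≤ ∑' i, d i := by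
    rw [← tsum_mul_left]
    calc (∑' i : B, s * (P (Q (i : ι))).toReal)
        ≤ ∑' i : B, d i := Summable.tsum_le_tsum (fun i => key i i.2) (hpB.mul_left s) hdB
      _ ≤ ∑' i, d i := Summable.tsum_subtype_le d B hd_nonneg hdsum
  have : s * ∑' i : B, (P (Q (i : ι))).toReal < s * s := by
    rw [hss]; exact hstep.trans_lt hdlt
  exact (le_of_lt ((mul_lt_mul_iff_right₀ hs0).mp this))
end

section
/- Suppose ν is a probability measure on a measurable space and Q_1, Q_2, R_1, R_2 are countable measurable partitions of it, with 0 < ε_1, ε_2 < 1. If R_1 ⊥_ν^{ε_1} Q_1, and R_1 = Q_2 ∨ R_2 (i.e., R_1 is the common refinement of Q_2 and R_2, consisting of the intersections Q ∩ R for Q ∈ Q_2 and R ∈ R_2) where R_2 ⊥_ν^{ε_2} Q_2, then R_2 ⊥_ν^{2√ε_1 + 2√ε_2} (Q_1 ∨ Q_2). -/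
open MeasureTheory

namespace Paper

/-- `P` is a countable measurable partition (indexed by `ι`) of the space `Ω`. -/
def IsPartition {Ω ι : Type*} [MeasurableSpace Ω] (P : ι → Set Ω) : Prop :=
  (∀ i, MeasurableSet (P i)) ∧ Pairwise (Function.onFun Disjoint P) ∧
    (⋃ i, P i) = Set.univ

/-- The partition `R` is `ε`-independent of the partition `Q` with respect to `ν`:
for a collection of atoms `Q` of total `ν`-measure at least `1 − ε`,
`Σ_R |ν(R|Q) − ν(R)| ≤ ε`. -/
def EpsIndep {Ω ι κ : Type*} [MeasurableSpace Ω] (ν : Measure Ω)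
    (R : κ → Set Ω) (Q : ι → Set Ω) (ε : ℝ) : Prop :=
  ∃ G : Set ι, 1 - ε ≤ (ν (⋃ i ∈ G, Q i)).toReal ∧
    ∀ i ∈ G, (∑' j : κ,
      |(ν (R j ∩ Q i)).toReal / (ν (Q i)).toReal - (ν (R j)).toReal|) ≤ ε

end Paper

open Paper

/-!
For atoms `A = Q₁ i` and `B = Q₂ k` let `p = ν(B | A)`, and let `a(i, k)` be the part inside `B`
of the deviation of `Q₂ ∨ R₂` from independence of `A`; summed over `k` it is at most `ε₁` for
good `i`. Passing from `ν(· | A ∩ B)` to `ν(B ∩ ·) / p` and then to `ν(· | B)` costs at most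
`2 a(i, k) / p`, so atoms with `a(i, k) ≤ √ε₁ p` and good `k` deviate by at most `2√ε₁ + ε₂`.
By Markov's inequality the remaining atoms with good `i` carry mass at most `ε₁ / √ε₁ = √ε₁`,
and the bad atoms of `Q₁` and of `Q₂` carry mass at most `min(1, ε) ≤ √ε` each.
-/

open Set

namespace Paper

variable {Ω ι κ : Type*} [MeasurableSpace Ω] {ν : Measure Ω}

noncomputable def atomDev (ν : Measure Ω) (R : κ → Set Ω) (A : Set Ω) : ℝ :=
  ∑' j, |ν.real (R j ∩ A) / ν.real A - ν.real (R j)|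

lemma epsIndep_iff {R : κ → Set Ω} {Q : ι → Set Ω} {ε : ℝ} :
    EpsIndep ν R Q ε ↔
      ∃ G : Set ι, 1 - ε ≤ ν.real (⋃ i ∈ G, Q i) ∧ ∀ i ∈ G, atomDev ν R (Q i) ≤ ε :=
  Iff.rfl

lemma atomDev_nonneg (R : κ → Set Ω) (A : Set Ω) : 0 ≤ atomDev ν R A :=
  tsum_nonneg fun _ => abs_nonneg _

lemma measureReal_mul_inter_div [IsFiniteMeasure ν] (s t : Set Ω) :
    ν.real s * (ν.real (s ∩ t) / ν.real s) = ν.real (s ∩ t) := by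
  rcases eq_or_ne (ν.real s) 0 with h | h
  · rw [h, zero_mul, measureReal_mono_null inter_subset_left h]
  · exact mul_div_cancel₀ _ h

lemma tsum_abs_div_sub_le {x y r : κ → ℝ} {p q : ℝ} (hp : 0 < p) (hq : 0 < q)
    (hx : HasSum x p) (hy : HasSum y q) (hy0 : ∀ j, 0 ≤ y j) (hr : Summable r) :
    ∑' j, |x j / p - r j| ≤ 2 * (∑' j, |x j - y j|) / p + ∑' j, |y j / q - r j| := by
  have hxy : Summable fun j => |x j - y j| := (hx.summable.sub hy.summable).abs
  have hyr : Summable fun j => |y j / q - r j| := ((hy.summable.div_const q).sub hr).abs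
  have hpq : |q - p| ≤ ∑' j, |x j - y j| := by
    have h := norm_tsum_le_tsum_norm (f := fun j => x j - y j) hxy
    rwa [(hx.sub hy).tsum_eq, Real.norm_eq_abs, abs_sub_comm] at h
  have hterm : ∀ j, |x j / p - r j|
      ≤ |x j - y j| / p + y j * (|q - p| / (p * q)) + |y j / q - r j| := fun j => by
    have hdiff : y j / p - y j / q = y j * ((q - p) / (p * q)) := by field_simp
    calc |x j / p - r j| ≤ |x j / p - y j / q| + |y j / q - r j| := abs_sub_le _ _ _
      _ ≤ |x j / p - y j / p| + |y j / p - y j / q| + |y j / q - r j| := by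
        gcongr
        exact abs_sub_le _ _ _
      _ = _ := by
        rw [← sub_div, abs_div, abs_of_pos hp, hdiff, abs_mul, abs_div, abs_of_pos (mul_pos hp hq),
          abs_of_nonneg (hy0 j)]
  calc ∑' j, |x j / p - r j|
      ≤ ∑' j, (|x j - y j| / p + y j * (|q - p| / (p * q)) + |y j / q - r j|) :=
        Summable.tsum_le_tsum hterm ((hx.summable.div_const p).sub hr).abs
          (((hxy.div_const p).add (hy.summable.mul_right _)).add hyr)
    _ = (∑' j, |x j - y j|) / p + |q - p| / p + ∑' j, |y j / q - r j| := by
        rw [Summable.tsum_add ((hxy.div_const p).add (hy.summable.mul_right _)) hyr,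
          Summable.tsum_add (hxy.div_const p) (hy.summable.mul_right _), tsum_div_const,
          tsum_mul_right, hy.tsum_eq]
        field_simp
    _ ≤ _ := by
        rw [mul_div_assoc, two_mul]
        gcongr

namespace IsPartition

variable {P : ι → Set Ω}

lemma prod {ι' : Type*} {P' : ι' → Set Ω} (hP : IsPartition P) (hP' : IsPartition P') :
    IsPartition fun p : ι × ι' => P p.1 ∩ P' p.2 := by
  refine ⟨fun p => (hP.1 p.1).inter (hP'.1 p.2), fun p q hpq => ?_, ?_⟩
  · by_cases h : p.1 = q.1
    · exact (hP'.2.1 fun h' => hpq (Prod.ext h h')).mono inter_subset_right inter_subset_right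
    · exact (hP.2.1 h).mono inter_subset_left inter_subset_left
  · refine eq_univ_of_forall fun x => ?_
    obtain ⟨i, hi⟩ := mem_iUnion.1 (hP.2.2 ▸ mem_univ x)
    obtain ⟨i', hi'⟩ := mem_iUnion.1 (hP'.2.2 ▸ mem_univ x)
    exact mem_iUnion.2 ⟨(i, i'), hi, hi'⟩

variable [Countable ι]

lemma hasSum_measureReal_inter [IsFiniteMeasure ν] (hP : IsPartition P) {S : Set Ω}
    (hS : MeasurableSet S) : HasSum (fun i => ν.real (P i ∩ S)) (ν.real S) := by
  have h : ν S = ∑' i, ν (P i ∩ S) := by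
    rw [← measure_iUnion (fun i j hij => (hP.2.1 hij).mono inter_subset_left inter_subset_left)
      (fun i => (hP.1 i).inter hS), ← iUnion_inter, hP.2.2, univ_inter]
  rw [measureReal_def, h, ENNReal.tsum_toReal_eq fun _ => measure_ne_top _ _]
  exact ENNReal.summable_toReal (h ▸ measure_ne_top ν S) |>.hasSum

lemma hasSum_measureReal [IsFiniteMeasure ν] (hP : IsPartition P) :
    HasSum (fun i => ν.real (P i)) (ν.real univ) := by
  simpa only [inter_univ] using hP.hasSum_measureReal_inter MeasurableSet.univ

lemma measureReal_biUnion [IsFiniteMeasure ν] (hP : IsPartition P) (S : Set ι) :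
    ν.real (⋃ i ∈ S, P i) = ∑' i : S, ν.real (P i) := by
  rw [measureReal_def, measure_biUnion S.to_countable (fun i _ j _ hij => hP.2.1 hij)
    (fun i _ => hP.1 i), ENNReal.tsum_toReal_eq fun _ => measure_ne_top _ _]
  rfl

lemma measureReal_biUnion_add_compl [IsProbabilityMeasure ν] (hP : IsPartition P) (S : Set ι) :
    ν.real (⋃ i ∈ S, P i) + ν.real (⋃ i ∈ Sᶜ, P i) = 1 := by
  have hs := (hP.hasSum_measureReal (ν := ν)).summable
  rw [hP.measureReal_biUnion, hP.measureReal_biUnion,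
    Summable.tsum_add_tsum_compl (hs.subtype S) (hs.subtype Sᶜ), hP.hasSum_measureReal.tsum_eq,
    probReal_univ]

lemma measureReal_biUnion_compl_le_sqrt [IsProbabilityMeasure ν] (hP : IsPartition P)
    {S : Set ι} {ε : ℝ} (h : 1 - ε ≤ ν.real (⋃ i ∈ S, P i)) :
    ν.real (⋃ i ∈ Sᶜ, P i) ≤ √ε := by
  have hsum := hP.measureReal_biUnion_add_compl (ν := ν) S
  have h0 : 0 ≤ ν.real (⋃ i ∈ Sᶜ, P i) := measureReal_nonneg
  refine Real.le_sqrt_of_sq_le ((sq_le h0 ?_).trans ?_) <;>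
    linarith [measureReal_nonneg (μ := ν) (s := ⋃ i ∈ S, P i)]

lemma summable_abs_sub [IsFiniteMeasure ν] (hP : IsPartition P) {A : Set Ω}
    (hA : MeasurableSet A) :
    Summable fun i => |ν.real (P i ∩ A) / ν.real A - ν.real (P i)| :=
  (((hP.hasSum_measureReal_inter hA).summable.div_const _).sub
    hP.hasSum_measureReal.summable).abs

section Join

variable [IsProbabilityMeasure ν] {ι' : Type*} [Countable ι'] {P' : ι' → Set Ω}

lemma measureReal_biUnion_setOf_lt_le (hP : IsPartition P) (hP' : IsPartition P')
    {a : ι → ι' → ℝ} {s : ι → ℝ} (ha0 : ∀ i k, 0 ≤ a i k) (ha : ∀ i, HasSum (a i) (s i))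
    {G : Set ι} {ε t : ℝ} (hε : 0 ≤ ε) (hs : ∀ i ∈ G, s i ≤ ε) (ht : 0 < t) :
    ν.real (⋃ p ∈ {p : ι × ι' | p.1 ∈ G ∧ t * (ν.real (P p.1 ∩ P' p.2) / ν.real (P p.1))
      < a p.1 p.2}, P p.1 ∩ P' p.2) ≤ ε / t := by
  set B := {p : ι × ι' | p.1 ∈ G ∧ t * (ν.real (P p.1 ∩ P' p.2) / ν.real (P p.1)) < a p.1 p.2}
  set w : ι × ι' → ℝ := fun p => ν.real (P p.1 ∩ P' p.2)
  have hB : Summable (B.indicator w) := (hP.prod hP').hasSum_measureReal.summable.indicator B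
  have hfiber : ∀ i, ∑' k, B.indicator w (i, k) ≤ ν.real (P i) * (ε / t) := by
    intro i
    by_cases hi : i ∈ G
    · have hterm : ∀ k, B.indicator w (i, k) ≤ ν.real (P i) / t * a i k := fun k => by
        by_cases hk : (i, k) ∈ B
        · rw [indicator_of_mem hk]
          change ν.real (P i ∩ P' k) ≤ _
          rw [← measureReal_mul_inter_div, div_mul_eq_mul_div, mul_div_assoc]
          exact mul_le_mul_of_nonneg_left ((le_div_iff₀' ht).2 hk.2.le) measureReal_nonneg
        · rw [indicator_of_notMem hk]
          exact mul_nonneg (div_nonneg measureReal_nonneg ht.le) (ha0 i k)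
      calc ∑' k, B.indicator w (i, k) ≤ ∑' k, ν.real (P i) / t * a i k :=
            (hB.prod_factor i).tsum_le_tsum hterm ((ha i).summable.mul_left _)
        _ = ν.real (P i) / t * s i := by rw [tsum_mul_left, (ha i).tsum_eq]
        _ ≤ ν.real (P i) * (ε / t) := by
            rw [div_mul_eq_mul_div, mul_div_assoc]
            gcongr
            exact hs i hi
    · have hzero : ∀ k, B.indicator w (i, k) = 0 := fun k =>
        indicator_of_notMem (fun h => hi h.1) _
      simp only [hzero, tsum_zero]
      exact mul_nonneg measureReal_nonneg (div_nonneg hε ht.le)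
  calc ν.real (⋃ p ∈ B, P p.1 ∩ P' p.2) = ∑' i, ∑' k, B.indicator w (i, k) := by
        rw [(hP.prod hP').measureReal_biUnion]
        exact (tsum_subtype B w).trans (hB.tsum_prod' hB.prod_factor)
    _ ≤ ∑' i, ν.real (P i) * (ε / t) :=
        hB.prod.tsum_le_tsum hfiber (hP.hasSum_measureReal.summable.mul_right _)
    _ = ε / t := by rw [tsum_mul_right, hP.hasSum_measureReal.tsum_eq, probReal_univ, one_mul]

lemma one_sub_le_measureReal_biUnion_prod (hP : IsPartition P) (hP' : IsPartition P')
    (G : Set ι) (G' : Set ι') (B : Set (ι × ι')) :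
    1 - ν.real (⋃ i ∈ Gᶜ, P i) - ν.real (⋃ k ∈ G'ᶜ, P' k) - ν.real (⋃ p ∈ B, P p.1 ∩ P' p.2)
      ≤ ν.real (⋃ p ∈ {p : ι × ι' | 0 < ν.real (P p.1 ∩ P' p.2) ∧ p.1 ∈ G ∧ p.2 ∈ G' ∧ p ∉ B},
          P p.1 ∩ P' p.2) := by
  set N := {p : ι × ι' | ν.real (P p.1 ∩ P' p.2) ≤ 0}
  have hN : ν.real (⋃ p ∈ N, P p.1 ∩ P' p.2) = 0 := by
    rw [(hP.prod hP').measureReal_biUnion]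
    exact (tsum_congr fun p => le_antisymm p.2 measureReal_nonneg).trans tsum_zero
  have hsub : ⋃ p ∈ {p : ι × ι' | 0 < ν.real (P p.1 ∩ P' p.2) ∧ p.1 ∈ G ∧ p.2 ∈ G' ∧ p ∉ B}ᶜ,
      P p.1 ∩ P' p.2 ⊆ (⋃ p ∈ N, P p.1 ∩ P' p.2) ∪ (⋃ i ∈ Gᶜ, P i) ∪ (⋃ k ∈ G'ᶜ, P' k) ∪
        ⋃ p ∈ B, P p.1 ∩ P' p.2 := by
    intro x hx
    obtain ⟨p, hp, hxp⟩ := mem_iUnion₂.1 hx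
    simp only [mem_compl_iff, mem_ofPred_eq, not_and_or, not_lt, not_not] at hp
    rcases hp with h | h | h | h
    · exact Or.inl (Or.inl (Or.inl (mem_biUnion h hxp)))
    · exact Or.inl (Or.inl (Or.inr (mem_biUnion h hxp.1)))
    · exact Or.inl (Or.inr (mem_biUnion h hxp.2))
    · exact Or.inr (mem_biUnion h hxp)
  have hbad := (measureReal_mono (μ := ν) hsub).trans ((measureReal_union_le _ _).trans
    (add_le_add ((measureReal_union_le _ _).trans
      (add_le_add (measureReal_union_le _ _) le_rfl)) le_rfl))
  linarith [(hP.prod hP').measureReal_biUnion_add_compl (ν := ν)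
    {p : ι × ι' | 0 < ν.real (P p.1 ∩ P' p.2) ∧ p.1 ∈ G ∧ p.2 ∈ G' ∧ p ∉ B}]

end Join

end IsPartition

section Deviation

variable [IsFiniteMeasure ν] {ι' : Type*} [Countable ι'] [Countable κ]

lemma hasSum_atomDev_prod {S : ι' → Set Ω} {R : κ → Set Ω} (hS : IsPartition S)
    (hR : IsPartition R) {A : Set Ω} (hA : MeasurableSet A) :
    HasSum (fun k => atomDev ν (fun j => S k ∩ R j) A)
      (atomDev ν (fun p : ι' × κ => S p.1 ∩ R p.2) A) :=
  have h := (hS.prod hR).summable_abs_sub (ν := ν) hA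
  h.hasSum.prod_fiberwise fun k => (h.prod_factor k).hasSum

lemma atomDev_inter_le {R : κ → Set Ω} (hR : IsPartition R) {A B : Set Ω}
    (hA : MeasurableSet A) (hB : MeasurableSet B) (hAB : 0 < ν.real (A ∩ B)) {s : ℝ}
    (hs : atomDev ν (fun j => B ∩ R j) A ≤ s * (ν.real (A ∩ B) / ν.real A)) :
    atomDev ν R (A ∩ B) ≤ 2 * s + atomDev ν R B := by
  have hA0 : 0 < ν.real A := hAB.trans_le (measureReal_mono inter_subset_left)
  have hB0 : 0 < ν.real B := hAB.trans_le (measureReal_mono inter_subset_right)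
  have hp : 0 < ν.real (A ∩ B) / ν.real A := div_pos hAB hA0
  have hset : ∀ j, B ∩ R j ∩ A = R j ∩ (A ∩ B) := fun j => by
    rw [inter_comm B, inter_assoc, inter_comm B]
  have hx : HasSum (fun j => ν.real (B ∩ R j ∩ A) / ν.real A) (ν.real (A ∩ B) / ν.real A) := by
    simpa only [hset] using (hR.hasSum_measureReal_inter (hA.inter hB)).div_const (ν.real A)
  have hy : HasSum (fun j => ν.real (B ∩ R j)) (ν.real B) := by
    simpa only [inter_comm B] using hR.hasSum_measureReal_inter hB
  have key := tsum_abs_div_sub_le hp hB0 hx hy (fun _ => measureReal_nonneg)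
    (hR.hasSum_measureReal (ν := ν)).summable
  have hdev_inter : atomDev ν R (A ∩ B) = ∑' j, |ν.real (B ∩ R j ∩ A) / ν.real A
      / (ν.real (A ∩ B) / ν.real A) - ν.real (R j)| :=
    tsum_congr fun j => by rw [div_div_div_cancel_right₀ hA0.ne', hset]
  have hdev_B : atomDev ν R B = ∑' j, |ν.real (B ∩ R j) / ν.real B - ν.real (R j)| := by
    simp only [atomDev, inter_comm B]
  calc atomDev ν R (A ∩ B) ≤ 2 * atomDev ν (fun j => B ∩ R j) A / (ν.real (A ∩ B) / ν.real A)
        + atomDev ν R B := by rw [hdev_inter, hdev_B]; exact key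
    _ ≤ 2 * s + atomDev ν R B := by
        rw [mul_div_assoc]
        gcongr
        exact (div_le_iff₀ hp).2 hs

end Deviation

end Paper

theorem statement7_general {Ω : Type*} [MeasurableSpace Ω]
    (ν : Measure Ω) [IsProbabilityMeasure ν]
    {ι₁ ι₂ ι₃ : Type*} [Countable ι₁] [Countable ι₂] [Countable ι₃]
    (Q₁ : ι₁ → Set Ω) (Q₂ : ι₂ → Set Ω) (R₂ : ι₃ → Set Ω)
    (hQ₁ : IsPartition Q₁) (hQ₂ : IsPartition Q₂) (hR₂ : IsPartition R₂)
    (ε₁ ε₂ : ℝ) (hε₁ : 0 < ε₁) (hε₂' : ε₂ < 1)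
    (h₁ : EpsIndep ν (fun p : ι₂ × ι₃ => Q₂ p.1 ∩ R₂ p.2) Q₁ ε₁)
    (h₂ : EpsIndep ν R₂ Q₂ ε₂) :
    EpsIndep ν R₂ (fun p : ι₁ × ι₂ => Q₁ p.1 ∩ Q₂ p.2)
      (2 * Real.sqrt ε₁ + 2 * Real.sqrt ε₂) := by
  rw [epsIndep_iff] at h₁ h₂ ⊢
  obtain ⟨G₁, hG₁, hdev₁⟩ := h₁
  obtain ⟨G₂, hG₂, hdev₂⟩ := h₂
  set B := {p : ι₁ × ι₂ | p.1 ∈ G₁ ∧ √ε₁ * (ν.real (Q₁ p.1 ∩ Q₂ p.2) / ν.real (Q₁ p.1))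
    < atomDev ν (fun j => Q₂ p.2 ∩ R₂ j) (Q₁ p.1)}
  refine ⟨{p | 0 < ν.real (Q₁ p.1 ∩ Q₂ p.2) ∧ p.1 ∈ G₁ ∧ p.2 ∈ G₂ ∧ p ∉ B}, ?_,
    fun ⟨i, k⟩ ⟨hpos, hi, hk, hgood⟩ => ?_⟩
  · have hB : ν.real (⋃ p ∈ B, Q₁ p.1 ∩ Q₂ p.2) ≤ √ε₁ := by
      simpa only [Real.div_sqrt] using hQ₁.measureReal_biUnion_setOf_lt_le hQ₂
        (fun i k => atomDev_nonneg _ _) (fun i => hasSum_atomDev_prod hQ₂ hR₂ (hQ₁.1 i))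
        hε₁.le hdev₁ (Real.sqrt_pos.2 hε₁)
    linarith [hQ₁.one_sub_le_measureReal_biUnion_prod (ν := ν) hQ₂ G₁ G₂ B,
      hQ₁.measureReal_biUnion_compl_le_sqrt hG₁, hQ₂.measureReal_biUnion_compl_le_sqrt hG₂,
      Real.sqrt_nonneg ε₂]
  · calc atomDev ν R₂ (Q₁ i ∩ Q₂ k) ≤ 2 * √ε₁ + atomDev ν R₂ (Q₂ k) :=
          atomDev_inter_le hR₂ (hQ₁.1 i) (hQ₂.1 k) hpos (not_lt.1 fun h => hgood ⟨hi, h⟩)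
      _ ≤ 2 * √ε₁ + 2 * √ε₂ := by
          linarith [hdev₂ k hk, Real.le_sqrt_self_iff.2 hε₂'.le, Real.sqrt_nonneg ε₂]

/-- **Inductive step.** If `ν` is a probability measure, `Q₁, Q₂, R₂` are
countable measurable partitions with `0 < ε₁, ε₂ < 1`, the join `Q₂ ∨ R₂` is
`ε₁`-independent of `Q₁`, and `R₂` is `ε₂`-independent of `Q₂`, then `R₂` is
`(2√ε₁ + 2√ε₂)`-independent of `Q₁ ∨ Q₂`. -/
theorem statement7 {Ω : Type*} [MeasurableSpace Ω]
    (ν : Measure Ω) [IsProbabilityMeasure ν]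
    {ι₁ ι₂ ι₃ : Type*} [Countable ι₁] [Countable ι₂] [Countable ι₃]
    (Q₁ : ι₁ → Set Ω) (Q₂ : ι₂ → Set Ω) (R₂ : ι₃ → Set Ω)
    (hQ₁ : IsPartition Q₁) (hQ₂ : IsPartition Q₂) (hR₂ : IsPartition R₂)
    (ε₁ ε₂ : ℝ) (hε₁ : 0 < ε₁) (hε₁' : ε₁ < 1) (hε₂ : 0 < ε₂) (hε₂' : ε₂ < 1)
    (h₁ : EpsIndep ν (fun p : ι₂ × ι₃ => Q₂ p.1 ∩ R₂ p.2) Q₁ ε₁)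
    (h₂ : EpsIndep ν R₂ Q₂ ε₂) :
    EpsIndep ν R₂ (fun p : ι₁ × ι₂ => Q₁ p.1 ∩ Q₂ p.2)
      (2 * Real.sqrt ε₁ + 2 * Real.sqrt ε₂) :=
  statement7_general ν Q₁ Q₂ R₂ hQ₁ hQ₂ hR₂ ε₁ ε₂ hε₁ hε₂' h₁ h₂
end

section
/- If m is a positive integer and 0 < σ < 1, then the binomial coefficient satisfies C(m, ⌊σm⌋) < 2^{3m√σ}. -/
open Real

/-- Key real inequality: for `0 < x ≤ 1`, `x * (1 - log x) < 3 * log 2 * √x`. -/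
lemma aux_key {x : ℝ} (hx : 0 < x) (hx1 : x ≤ 1) :
    x * (1 - Real.log x) < 3 * Real.log 2 * Real.sqrt x := by
  have hs : 0 < Real.sqrt x := Real.sqrt_pos.2 hx
  have hlog : Real.log (1 / Real.sqrt x) ≤ 1 / Real.sqrt x - 1 :=
    Real.log_le_sub_one_of_pos (by positivity)
  have hlx : -Real.log x = 2 * Real.log (1 / Real.sqrt x) := by
    rw [Real.log_div (by norm_num) (ne_of_gt hs), Real.log_one, Real.log_sqrt hx.le]
    ring
  have h2 : x * (1 - Real.log x) ≤ 2 * Real.sqrt x - x := by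
    have : x * (1 - Real.log x) = x + x * (-Real.log x) := by ring
    rw [this, hlx]
    have hxs : x = Real.sqrt x * Real.sqrt x := (Real.mul_self_sqrt hx.le).symm
    have : x * (2 * Real.log (1 / Real.sqrt x)) ≤ x * (2 * (1 / Real.sqrt x - 1)) := by
      apply mul_le_mul_of_nonneg_left _ hx.le
      linarith
    calc x + x * (2 * Real.log (1 / Real.sqrt x))
        ≤ x + x * (2 * (1 / Real.sqrt x - 1)) := by linarith
      _ = 2 * Real.sqrt x - x := by
          field_simp
          nlinarith [Real.mul_self_sqrt hx.le]
  have h3 : 2 * Real.sqrt x - x < 2 * Real.sqrt x := by linarith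
  have h4 : (2 : ℝ) < 3 * Real.log 2 := by
    have := Real.log_two_gt_d9; linarith
  calc x * (1 - Real.log x) < 2 * Real.sqrt x := lt_of_le_of_lt h2 h3
    _ < 3 * Real.log 2 * Real.sqrt x := by nlinarith

/-- If `m` is a positive integer and `0 < σ < 1`, then the binomial
coefficient satisfies `C(m, ⌊σm⌋) < 2^{3m√σ}`. -/
theorem statement9 (m : ℕ) (hm : 0 < m) (σ : ℝ) (h0 : 0 < σ) (h1 : σ < 1) :
    (m.choose ⌊σ * m⌋₊ : ℝ) < (2 : ℝ) ^ (3 * (m : ℝ) * Real.sqrt σ) := by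
  have hM : (0 : ℝ) < m := Nat.cast_pos.2 hm
  have hs : 0 < Real.sqrt σ := Real.sqrt_pos.2 h0
  have hrhs : (2 : ℝ) ^ (3 * (m : ℝ) * Real.sqrt σ)
      = Real.exp (3 * (m : ℝ) * Real.sqrt σ * Real.log 2) := by
    rw [Real.rpow_def_of_pos (by norm_num)]; ring_nf
  set k := ⌊σ * m⌋₊ with hk
  rcases Nat.eq_zero_or_pos k with h | h
  · rw [h]
    simp only [Nat.choose_zero_right, Nat.cast_one]
    rw [hrhs]
    have : (0:ℝ) < 3 * (m : ℝ) * Real.sqrt σ * Real.log 2 := by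
      have := Real.log_pos (by norm_num : (1:ℝ) < 2); positivity
    calc (1:ℝ) = Real.exp 0 := Real.exp_zero.symm
      _ < _ := Real.exp_lt_exp.2 this
  · have hk0 : (0 : ℝ) < k := Nat.cast_pos.2 h
    have hkσm : (k : ℝ) ≤ σ * m := Nat.floor_le (by positivity)
    -- choose bound: choose m k ≤ m^k / k! ≤ (e*m/k)^k
    have hb1 : (m.choose k : ℝ) * (k.factorial : ℝ) ≤ (m : ℝ) ^ k := by
      have := Nat.descFactorial_le_pow m k
      have h2 := (Nat.descFactorial_eq_factorial_mul_choose m k)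
      have : k.factorial * m.choose k ≤ m ^ k := h2 ▸ this
      exact_mod_cast by linarith [this]
    have hfac : (0 : ℝ) < (k.factorial : ℝ) := Nat.cast_pos.2 k.factorial_pos
    have hb2 : ((k : ℝ) ^ k) / (k.factorial : ℝ) ≤ Real.exp k :=
      Real.pow_div_factorial_le_exp _ (Nat.cast_nonneg k) k
    have hchoose : (m.choose k : ℝ) ≤ (Real.exp 1 * m / k) ^ k := by
      have h1' : (m.choose k : ℝ) ≤ (m : ℝ) ^ k / (k.factorial : ℝ) :=
        (le_div_iff₀ hfac).2 hb1
      have h2' : (m : ℝ) ^ k / (k.factorial : ℝ) ≤ (Real.exp 1 * m / k) ^ k := by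
        rw [div_pow, mul_pow]
        rw [div_le_div_iff₀ hfac (by positivity)]
        have hee : Real.exp 1 ^ k = Real.exp k := by
          rw [← Real.exp_nat_mul]; norm_num
        rw [hee]
        have : (k:ℝ)^k ≤ Real.exp k * k.factorial := by
          rw [div_le_iff₀ hfac] at hb2; linarith
        nlinarith [pow_pos hM k, Real.exp_pos (k:ℝ)]
      linarith
    -- log comparison
    have hpos : (0:ℝ) < Real.exp 1 * m / k := by positivity
    have hlogineq : (k : ℝ) * Real.log (Real.exp 1 * m / k)
        < 3 * (m : ℝ) * Real.sqrt σ * Real.log 2 := by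
      have hx : (0 : ℝ) < (k:ℝ)/m := by positivity
      have hx1 : (k:ℝ)/m ≤ σ := (div_le_iff₀ hM).2 (by linarith)
      have hkey := aux_key hx (le_trans hx1 h1.le)
      have hsx : Real.sqrt ((k:ℝ)/m) ≤ Real.sqrt σ := Real.sqrt_le_sqrt hx1
      have hlog : Real.log (Real.exp 1 * m / k) = 1 - Real.log ((k:ℝ)/m) := by
        rw [Real.log_div (by positivity) (ne_of_gt hk0), Real.log_mul (by positivity) (ne_of_gt hM),
          Real.log_exp, Real.log_div (ne_of_gt hk0) (ne_of_gt hM)]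
        ring
      rw [hlog]
      have : (k:ℝ) * (1 - Real.log ((k:ℝ)/m)) = m * (((k:ℝ)/m) * (1 - Real.log ((k:ℝ)/m))) := by
        field_simp
      rw [this]
      calc (m:ℝ) * (((k:ℝ)/m) * (1 - Real.log ((k:ℝ)/m)))
          < m * (3 * Real.log 2 * Real.sqrt ((k:ℝ)/m)) := by
            exact mul_lt_mul_of_pos_left hkey hM
        _ ≤ m * (3 * Real.log 2 * Real.sqrt σ) := by
            apply mul_le_mul_of_nonneg_left _ hM.le
            have := Real.log_pos (by norm_num : (1:ℝ) < 2)
            nlinarith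
        _ = 3 * (m : ℝ) * Real.sqrt σ * Real.log 2 := by ring
    calc (m.choose k : ℝ) ≤ (Real.exp 1 * m / k) ^ k := hchoose
      _ = Real.exp ((k : ℝ) * Real.log (Real.exp 1 * m / k)) := by
          rw [← Real.log_pow, Real.exp_log (by positivity)]
      _ < Real.exp (3 * (m : ℝ) * Real.sqrt σ * Real.log 2) := Real.exp_lt_exp.2 hlogineq
      _ = (2 : ℝ) ^ (3 * (m : ℝ) * Real.sqrt σ) := hrhs.symm
end
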